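/- arXiv:2207.12128 — 6 statements merged into one kernel-verified Lean document; each statement's English description precedes it below -/
import Mathlib

section
/- Let G be a broken wheel with principal path P = p p' p'' and let L be a list-assignment for G with |L(v)| ≥ 3 for every vertex v ∈ V(G) \ {p, p'}. Let φ₀ and φ₁ be two distinct L-colorings of the edge pp', and for i = 0, 1 set Sᵢ := Λ_G(φᵢ(p), φᵢ(p'), •); suppose |S₀| = |S₁| = 1. If φ₀(p) = φ₁(p) and S₀ = S₁, then the path G − p' has an even number of edges. -/
/-- Vertex type of a broken wheel whose hub-deleted path `p u₁ … u_t p''` has `t + 2`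
vertices: `some i` is the `i`-th path vertex (so `some 0 = p` and
`some (Fin.last (t+1)) = p''`), and `none` is the hub `p'`. -/
abbrev BWVert (t : ℕ) := Option (Fin (t + 2))

/-- Adjacency in the broken wheel: the hub `p'` is adjacent to every path vertex, and
two path vertices are adjacent exactly when they are consecutive. -/
def bwAdj (t : ℕ) : BWVert t → BWVert t → Prop
  | none, none => False
  | none, some _ => True
  | some _, none => True
  | some i, some j => i.val + 1 = j.val ∨ j.val + 1 = i.val

/-- An `L`-coloring of (all of) the broken wheel. -/
def IsBWColoring (t : ℕ) (L : BWVert t → Finset ℕ) (c : BWVert t → ℕ) : Prop :=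
  (∀ v, c v ∈ L v) ∧ ∀ v w, bwAdj t v w → c v ≠ c w

/-- `Λ_G(a, b, •)`: the set of colors `x` such that some `L`-coloring of the broken wheel
uses `a, b, x` on `p, p', p''` respectively. -/
def Lambda (t : ℕ) (L : BWVert t → Finset ℕ) (a b : ℕ) : Set ℕ :=
  {x | ∃ c : BWVert t → ℕ, IsBWColoring t L c ∧
    c (some 0) = a ∧ c none = b ∧ c (some (Fin.last (t + 1))) = x}

/-!
With the hub coloured `b`, the rim `p = 0, 1, …, t + 1 = p''` is a path whose lists, apart from
that of `p`, lose at most `b` and so keep at least two colours. Then `Λ(a, b)` is a single colour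
only if every rim vertex has a single available colour: the colouring `c` is forced, and every rim
list is exactly `{b, c (i - 1), c i}`. For two hub colours `b₀ ≠ b₁` and the same `a`, the two
forced colourings `c, d` share these lists, which makes them agree (avoiding `b₀, b₁`) at even
vertices and equal `b₁, b₀` at odd ones. If `t + 1` were odd, we would get
`Λ(a, b₀) = {b₁} ≠ {b₀} = Λ(a, b₁)`.
-/

open Finset

namespace PathListColoring

variable {α : Type*} [DecidableEq α]

def pathReach (M : ℕ → Finset α) (a : α) : ℕ → Finset α
  | 0 => {a}
  | i + 1 => (M (i + 1)).filter fun x => ∃ y ∈ pathReach M a i, y ≠ x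

theorem mem_pathReach_iff {M : ℕ → Finset α} {a x : α} {n : ℕ} :
    x ∈ pathReach M a n ↔ ∃ g : ℕ → α, g 0 = a ∧ g n = x ∧
      (∀ i, 1 ≤ i → i ≤ n → g i ∈ M i) ∧ ∀ i < n, g i ≠ g (i + 1) := by
  induction n generalizing x with
  | zero =>
    simp only [pathReach, mem_singleton]
    refine ⟨fun hx => ⟨fun _ => a, rfl, hx.symm, by omega, by omega⟩, ?_⟩
    rintro ⟨g, hg0, rfl, -, -⟩
    exact hg0
  | succ n ih =>
    simp only [pathReach, mem_filter]
    constructor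
    · rintro ⟨hxM, y, hy, hyx⟩
      obtain ⟨g, hg0, rfl, hgM, hgne⟩ := ih.1 hy
      refine ⟨fun i => if i ≤ n then g i else x, by simpa using hg0, by simp, ?_, ?_⟩
      · intro i hi₁ hi₂
        by_cases hi : i ≤ n
        · simpa [hi] using hgM i hi₁ hi
        · simpa [hi, show i = n + 1 by omega] using hxM
      · intro i hi
        rcases Nat.lt_or_ge i n with hin | hin
        · simpa [hin.le, Nat.succ_le_of_lt hin] using hgne i hin
        · simpa [show i = n by omega] using hyx
    · rintro ⟨g, hg0, rfl, hgM, hgne⟩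
      exact ⟨hgM (n + 1) (by omega) le_rfl, g n,
        ih.2 ⟨g, hg0, rfl, fun i hi₁ _ => hgM i hi₁ (by omega), fun i hi => hgne i (by omega)⟩,
        hgne n (by omega)⟩

theorem pathReach_succ_of_eq_singleton {M : ℕ → Finset α} {a y : α} {i : ℕ}
    (h : pathReach M a i = {y}) : pathReach M a (i + 1) = (M (i + 1)).erase y := by
  simp only [pathReach, h, mem_singleton, exists_eq_left]
  exact filter_ne _ _

theorem card_pathReach_succ_ne_one {M : ℕ → Finset α} {a : α} {i : ℕ}
    (hM : 2 ≤ #(M (i + 1))) (h : #(pathReach M a i) ≠ 1) : #(pathReach M a (i + 1)) ≠ 1 := by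
  rcases Nat.lt_or_ge #(pathReach M a i) 1 with h0 | h2
  · simp [pathReach, card_eq_zero.1 (by omega : #(pathReach M a i) = 0)]
  · have : pathReach M a (i + 1) = M (i + 1) :=
      filter_true_of_mem fun x _ => exists_mem_ne (by omega) x
    rw [this]
    omega

/-- Since the lists have at least two colours, a vertex with no or with at least two available
colours passes this on to the next vertex, and so on to the end of the path. -/
theorem card_pathReach_eq_one_of_le {M : ℕ → Finset α} {a : α} {n i : ℕ}
    (hM : ∀ j, 1 ≤ j → j ≤ n → 2 ≤ #(M j)) (h : #(pathReach M a n) = 1) (hi : i ≤ n) :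
    #(pathReach M a i) = 1 := by
  by_contra hne
  induction n, hi using Nat.le_induction with
  | base => exact hne h
  | succ n hin ih =>
    exact card_pathReach_succ_ne_one (hM (n + 1) (by omega) le_rfl)
      (ih (fun j hj₁ hj₂ => hM j hj₁ (by omega)) · |>.elim) h

theorem exists_forced_of_card_pathReach_eq_one {M : ℕ → Finset α} {a : α} {n : ℕ}
    (hM : ∀ j, 1 ≤ j → j ≤ n → 2 ≤ #(M j)) (h : #(pathReach M a n) = 1) :
    ∃ c : ℕ → α, c 0 = a ∧ pathReach M a n = {c n} ∧
      ∀ i < n, c i ≠ c (i + 1) ∧ M (i + 1) = {c i, c (i + 1)} := by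
  have hsing : ∀ i, ∃ x, i ≤ n → pathReach M a i = {x} := fun i =>
    if hi : i ≤ n then (card_eq_one.1 (card_pathReach_eq_one_of_le hM h hi)).imp fun _ hx _ => hx
    else ⟨a, fun h => absurd h hi⟩
  choose c hc using hsing
  refine ⟨c, (singleton_injective (hc 0 n.zero_le)).symm, hc n le_rfl, fun i hi => ?_⟩
  have herase : (M (i + 1)).erase (c i) = {c (i + 1)} := by
    rw [← pathReach_succ_of_eq_singleton (hc i hi.le), hc (i + 1) hi]
  have hmem : c i ∈ M (i + 1) := by
    by_contra hnot
    have := hM (i + 1) (by omega) hi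
    rw [erase_eq_of_notMem hnot] at herase
    simp [herase] at this
  refine ⟨fun heq => ?_, ?_⟩
  · have : c (i + 1) ∈ (M (i + 1)).erase (c i) := herase ▸ mem_singleton_self _
    exact (mem_erase.1 this).1 heq.symm
  · rw [← insert_erase hmem, herase]

def IsForcedColoring (S : ℕ → Finset α) (b : α) (n : ℕ) (c : ℕ → α) : Prop :=
  c 0 ≠ b ∧ ∀ i < n, c i ≠ c (i + 1) ∧ b ∈ S (i + 1) ∧ (S (i + 1)).erase b = {c i, c (i + 1)}

theorem IsForcedColoring.alternate {S : ℕ → Finset α} {b₀ b₁ : α} {n : ℕ} {c d : ℕ → α}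
    (hc : IsForcedColoring S b₀ n c) (hd : IsForcedColoring S b₁ n d) (hb : b₀ ≠ b₁)
    (h0 : c 0 = d 0) {i : ℕ} (hi : i ≤ n) :
    (Even i → c i = d i ∧ c i ≠ b₀ ∧ c i ≠ b₁) ∧ (Odd i → c i = b₁ ∧ d i = b₀) := by
  induction i with
  | zero => exact ⟨fun _ => ⟨h0, hc.1, h0 ▸ hd.1⟩, fun h => absurd h (by decide)⟩
  | succ i ih =>
    obtain ⟨hev, hodd⟩ := ih (by omega)
    obtain ⟨hcne, hb₀, hc⟩ := hc.2 i (by omega)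
    obtain ⟨-, hb₁, hd⟩ := hd.2 i (by omega)
    have hc' : c (i + 1) ∈ (S (i + 1)).erase b₀ := hc ▸ by simp
    rcases Nat.even_or_odd i with hi | hi
    · -- `c i = d i` is shared, so each hub colour must fill the other's last slot
      obtain ⟨hcd, hcb₀, hcb₁⟩ := hev hi
      have h₁ : b₁ ∈ (S (i + 1)).erase b₀ := mem_erase.2 ⟨hb.symm, hb₁⟩
      have h₀ : b₀ ∈ (S (i + 1)).erase b₁ := mem_erase.2 ⟨hb, hb₀⟩
      rw [hc] at h₁
      rw [hd, ← hcd] at h₀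
      simp only [mem_insert, mem_singleton] at h₀ h₁
      refine ⟨fun h => absurd h (by simpa [Nat.even_add_one] using hi),
        fun _ => ⟨?_, ?_⟩⟩
      · exact (h₁.resolve_left (Ne.symm hcb₁)).symm
      · exact (h₀.resolve_left (Ne.symm hcb₀)).symm
    · obtain ⟨hcb, hdb⟩ := hodd hi
      have hcS : c (i + 1) ∈ (S (i + 1)).erase b₁ :=
        mem_erase.2 ⟨hcb ▸ hcne.symm, mem_of_mem_erase hc'⟩
      rw [hd, hdb] at hcS
      simp only [mem_insert, mem_singleton] at hcS
      have hcb₀ : c (i + 1) ≠ b₀ := (mem_erase.1 hc').1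
      refine ⟨fun _ => ⟨hcS.resolve_left hcb₀, hcb₀, hcb ▸ hcne.symm⟩,
        fun h => absurd h (by simpa [Nat.odd_add_one] using hi)⟩

end PathListColoring

open PathListColoring Fin.NatCast

/-- Indices beyond `t + 1` wrap around modulo `t + 2`; only `j ≤ t + 1` is ever used. -/
def rimList (t : ℕ) (L : BWVert t → Finset ℕ) (j : ℕ) : Finset ℕ :=
  L (some (j : Fin (t + 2)))

theorem lambda_subset_pathReach (t : ℕ) (L : BWVert t → Finset ℕ) (a b : ℕ) :
    Lambda t L a b ⊆ pathReach (fun j => (rimList t L j).erase b) a (t + 1) := by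
  rintro x ⟨c, ⟨hmem, hadj⟩, hc0, hcb, rfl⟩
  refine mem_pathReach_iff.2 ⟨fun i => c (some (i : Fin (t + 2))), by simpa using hc0,
    congrArg (c ∘ some) (Fin.natCast_eq_last _), fun i _ _ => mem_erase.2 ⟨?_, hmem _⟩,
    fun i hi => hadj _ _ ?_⟩
  · exact hcb ▸ hadj _ none trivial
  · exact Or.inl (by rw [Fin.val_cast_of_lt (by omega), Fin.val_cast_of_lt (by omega)])

theorem pathReach_subset_lambda (t : ℕ) (L : BWVert t → Finset ℕ) {a b : ℕ}
    (ha : a ∈ L (some 0)) (hb : b ∈ L none) (hab : a ≠ b) :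
    ↑(pathReach (fun j => (rimList t L j).erase b) a (t + 1)) ⊆ Lambda t L a b := by
  intro x hx
  obtain ⟨g, hg0, rfl, hgM, hgne⟩ := mem_pathReach_iff.1 hx
  have hrim : ∀ i : Fin (t + 2), g i ∈ L (some i) ∧ g i ≠ b := by
    intro i
    rcases Nat.eq_zero_or_pos i with hi | hi
    · obtain rfl : i = 0 := Fin.ext hi
      simpa [hg0] using ⟨ha, hab⟩
    · have := hgM i hi (by omega)
      simp only [rimList, Fin.cast_val_eq_self, mem_erase] at this
      exact ⟨this.2, this.1⟩
  refine ⟨fun v => v.elim b fun i => g i, ⟨?_, ?_⟩, by simpa using hg0, rfl, by simp⟩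
  · rintro (_ | i)
    exacts [hb, (hrim i).1]
  · rintro (_ | i) (_ | j) hij
    · exact absurd hij id
    · exact (hrim j).2.symm
    · exact (hrim i).2
    · rcases hij with hij | hij
      · simpa [← hij] using hgne i (by omega)
      · simpa [← hij] using (hgne j (by omega)).symm

theorem mem_lists_and_ne_of_mem_lambda {t : ℕ} {L : BWVert t → Finset ℕ} {a b x : ℕ}
    (hx : x ∈ Lambda t L a b) : a ∈ L (some 0) ∧ b ∈ L none ∧ a ≠ b := by
  obtain ⟨c, ⟨hmem, hadj⟩, rfl, rfl, -⟩ := hx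
  exact ⟨hmem _, hmem _, hadj _ none trivial⟩

theorem exists_forced_of_ncard_lambda_eq_one {t : ℕ} {L : BWVert t → Finset ℕ} {a b : ℕ}
    (hL : ∀ v : BWVert t, v ≠ some 0 → v ≠ none → 3 ≤ #(L v))
    (h : (Lambda t L a b).ncard = 1) :
    ∃ c : ℕ → ℕ, c 0 = a ∧ Lambda t L a b = {c (t + 1)} ∧
      IsForcedColoring (rimList t L) b (t + 1) c := by
  obtain ⟨x, hx⟩ := Set.ncard_eq_one.1 h
  obtain ⟨ha, hb, hab⟩ := mem_lists_and_ne_of_mem_lambda (hx ▸ Set.mem_singleton x)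
  have hΛ : Lambda t L a b = ↑(pathReach (fun j => (rimList t L j).erase b) a (t + 1)) :=
    (lambda_subset_pathReach t L a b).antisymm (pathReach_subset_lambda t L ha hb hab)
  have hrim : ∀ j, 1 ≤ j → j ≤ t + 1 → 3 ≤ #(rimList t L j) := fun j hj₁ hj₂ =>
    hL _ (by simp [Fin.ext_iff, Nat.mod_eq_of_lt (show j < t + 2 by omega)]; omega) (by simp)
  obtain ⟨c, hc0, hcn, hc⟩ := exists_forced_of_card_pathReach_eq_one
    (fun j hj₁ hj₂ => (Nat.le_sub_one_of_lt (hrim j hj₁ hj₂)).trans pred_card_le_card_erase)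
    (by rwa [hΛ, Set.ncard_coe_finset] at h)
  refine ⟨c, hc0, by rw [hΛ, hcn, coe_singleton], hc0 ▸ hab,
    fun i hi => ⟨(hc i hi).1, ?_, (hc i hi).2⟩⟩
  by_contra hb
  have := hrim (i + 1) (by omega) hi
  rw [← erase_eq_of_notMem hb, (hc i hi).2] at this
  exact absurd (this.trans card_le_two) (by decide)

theorem bwheel_same_p_same_S_even_general (t : ℕ) (L : BWVert t → Finset ℕ)
    (hL : ∀ v : BWVert t, v ≠ some 0 → v ≠ none → 3 ≤ (L v).card)
    (a₀ b₀ a₁ b₁ : ℕ)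
    (hdistinct : (a₀, b₀) ≠ (a₁, b₁))
    (hS₀ : (Lambda t L a₀ b₀).ncard = 1) (hS₁ : (Lambda t L a₁ b₁).ncard = 1)
    (hp : a₀ = a₁) (hS : Lambda t L a₀ b₀ = Lambda t L a₁ b₁) :
    Even (t + 1) := by
  subst hp
  have hb : b₀ ≠ b₁ := fun h => hdistinct (h ▸ rfl)
  obtain ⟨c, hc0, hΛ₀, hc⟩ := exists_forced_of_ncard_lambda_eq_one hL hS₀
  obtain ⟨d, hd0, hΛ₁, hd⟩ := exists_forced_of_ncard_lambda_eq_one hL hS₁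
  have hcd : c (t + 1) = d (t + 1) := Set.singleton_injective (hΛ₀.symm.trans (hS.trans hΛ₁))
  by_contra hodd
  obtain ⟨hcb, hdb⟩ := (hc.alternate hd hb (hc0.trans hd0.symm) le_rfl).2
    (Nat.not_even_iff_odd.1 hodd)
  exact hb (hdb ▸ hcb ▸ hcd).symm

/-- Theorem 2.4(1)(A): if `φ₀, φ₁` are distinct `L`-colorings of the edge `pp'` with
`|S₀| = |S₁| = 1`, `φ₀(p) = φ₁(p)` and `S₀ = S₁`, then the path `G - p'` (which has
`t + 1` edges) has an even number of edges. -/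
theorem bwheel_same_p_same_S_even (t : ℕ) (L : BWVert t → Finset ℕ)
    (hL : ∀ v : BWVert t, v ≠ some 0 → v ≠ none → 3 ≤ (L v).card)
    (a₀ b₀ a₁ b₁ : ℕ)
    (ha₀ : a₀ ∈ L (some 0)) (hb₀ : b₀ ∈ L none) (hne₀ : a₀ ≠ b₀)
    (ha₁ : a₁ ∈ L (some 0)) (hb₁ : b₁ ∈ L none) (hne₁ : a₁ ≠ b₁)
    (hdistinct : (a₀, b₀) ≠ (a₁, b₁))
    (hS₀ : (Lambda t L a₀ b₀).ncard = 1) (hS₁ : (Lambda t L a₁ b₁).ncard = 1)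
    (hp : a₀ = a₁) (hS : Lambda t L a₀ b₀ = Lambda t L a₁ b₁) :
    Even (t + 1) :=
  bwheel_same_p_same_S_even_general t L hL a₀ b₀ a₁ b₁ hdistinct hS₀ hS₁ hp hS
end

section
/- Let G be a broken wheel with principal path P = p p' p'' and let L be a list-assignment for G with |L(v)| ≥ 3 for every vertex v ∈ V(G) \ {p, p'}. Let φ₀ and φ₁ be two distinct L-colorings of the edge pp', and for i = 0, 1 set Sᵢ := Λ_G(φᵢ(p), φᵢ(p'), •); suppose |S₀| = |S₁| = 1. If φ₀(p) = φ₁(p) and S₀ ≠ S₁, then the path G − p' has an odd number of edges, and moreover S₀ = {φ₁(p')} and S₁ = {φ₀(p')}. -/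
theorem Finset.coe_eq_insert_of_sdiff_eq_singleton {α : Type*} {s : Finset α} {x y z : α}
    (hs : 3 ≤ s.card) (h : (s : Set α) \ {x, y} = {z}) : (s : Set α) = {x, y, z} := by
  classical
  refine Set.eq_of_subset_of_ncard_le (fun w hw => ?_) ?_ (Set.toFinite _)
  · by_cases hxy : w ∈ ({x, y} : Set α)
    · rcases hxy with rfl | rfl <;> simp
    · exact Or.inr (Or.inr (h ▸ ⟨hw, hxy⟩))
  · rw [Set.ncard_coe_finset]
    calc ({x, y, z} : Set α).ncard = ({x, y, z} : Finset α).card := by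
          rw [← Set.ncard_coe_finset]; push_cast; rfl
      _ ≤ s.card := Finset.card_le_three.trans hs

section ReachableColors

variable {α : Type*}

/-- `reachableColors ℓ a b i` is the set of colours of `vᵢ` over the proper colourings of a
path `v₀ v₁ … vᵢ` with `v₀ ↦ a` and `vⱼ ∈ ℓ j \ {b}` for `j ≥ 1`; in a broken wheel `b` is the
colour of the hub. -/
def reachableColors (ℓ : ℕ → Finset α) (a b : α) : ℕ → Set α
  | 0 => {a}
  | i + 1 => {x | x ∈ ℓ (i + 1) ∧ x ≠ b ∧ ∃ y ∈ reachableColors ℓ a b i, y ≠ x}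

variable {ℓ : ℕ → Finset α} {a b : α}

theorem reachableColors_subset (ha : a ∈ ℓ 0) (hab : a ≠ b) :
    ∀ i, reachableColors ℓ a b i ⊆ (ℓ i : Set α) \ {b}
  | 0, _, rfl => ⟨ha, hab⟩
  | _ + 1, _, ⟨hx, hxb, _⟩ => ⟨hx, hxb⟩

theorem exists_seq_of_mem_reachableColors {x : α} {n : ℕ} (hx : x ∈ reachableColors ℓ a b n) :
    ∃ f : ℕ → α, f n = x ∧ (∀ j ≤ n, f j ∈ reachableColors ℓ a b j) ∧ ∀ j < n, f j ≠ f (j + 1) := by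
  induction n generalizing x with
  | zero =>
    exact ⟨fun _ => x, rfl, fun j hj => by rwa [Nat.le_zero.mp hj], fun _ h => absurd h (by omega)⟩
  | succ n ih =>
    obtain ⟨hxℓ, hxb, y, hy, hyx⟩ := hx
    obtain ⟨f, hfn, hf, hff⟩ := ih hy
    refine ⟨Function.update f (n + 1) x, Function.update_self .., fun j hj => ?_, fun j hj => ?_⟩
    · rcases eq_or_ne j (n + 1) with rfl | hj'
      · rw [Function.update_self]; exact ⟨hxℓ, hxb, y, hy, hyx⟩
      · rw [Function.update_of_ne hj']; exact hf j (by omega)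
    · rw [Function.update_of_ne (by omega)]
      rcases eq_or_ne j n with rfl | hj'
      · rw [Function.update_self, hfn]; exact hyx
      · rw [Function.update_of_ne (by omega)]; exact hff j (by omega)

theorem reachableColors_succ_of_eq_singleton {i : ℕ} {y : α}
    (h : reachableColors ℓ a b i = {y}) :
    reachableColors ℓ a b (i + 1) = (ℓ (i + 1) : Set α) \ {b, y} := by
  ext x
  simp only [reachableColors, h, Set.mem_ofPred_eq, Set.mem_singleton_iff, exists_eq_left,
    Set.mem_sdiff, Finset.mem_coe, Set.mem_insert_iff, not_or]
  exact and_congr_right fun _ => and_congr_right fun _ => ne_comm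

theorem reachableColors_succ_nonempty {i : ℕ} (h3 : 3 ≤ (ℓ (i + 1)).card)
    (h : (reachableColors ℓ a b i).Nonempty) : (reachableColors ℓ a b (i + 1)).Nonempty := by
  classical
  obtain ⟨y, hy⟩ := h
  obtain ⟨x, hx⟩ : (ℓ (i + 1) \ {b, y}).Nonempty := by
    rw [← Finset.card_pos]
    have := Finset.le_card_sdiff {b, y} (ℓ (i + 1))
    have := Finset.card_le_two (a := b) (b := y)
    omega
  simp only [Finset.mem_sdiff, Finset.mem_insert, Finset.mem_singleton, not_or] at hx
  exact ⟨x, hx.1, hx.2.1, y, hy, Ne.symm hx.2.2⟩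

/-- Once two colours are reachable, every colour of the next list other than `b` is, since it
differs from one of them. -/
theorem reachableColors_succ_nontrivial {i : ℕ} (h3 : 3 ≤ (ℓ (i + 1)).card)
    (h : (reachableColors ℓ a b i).Nontrivial) : (reachableColors ℓ a b (i + 1)).Nontrivial := by
  classical
  obtain ⟨y₁, hy₁, y₂, hy₂, hy⟩ := h
  have hsub : ((ℓ (i + 1)).erase b : Set α) ⊆ reachableColors ℓ a b (i + 1) := by
    intro x hx
    rw [Finset.coe_erase, Set.mem_sdiff, Set.mem_singleton_iff] at hx
    refine ⟨hx.1, hx.2, ?_⟩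
    by_cases hx₁ : y₁ = x
    · exact ⟨y₂, hy₂, fun hx₂ => hy (hx₁.trans hx₂.symm)⟩
    · exact ⟨y₁, hy₁, hx₁⟩
  refine Set.Nontrivial.mono ?_ hsub
  refine Finset.one_lt_card_iff_nontrivial.mp ?_
  have := Finset.pred_card_le_card_erase (s := ℓ (i + 1)) (a := b)
  omega

variable {n : ℕ} (hℓ : ∀ i < n, 3 ≤ (ℓ (i + 1)).card)
include hℓ

theorem reachableColors_nonempty {i : ℕ} (hi : i ≤ n) : (reachableColors ℓ a b i).Nonempty := by
  induction i with
  | zero => exact Set.singleton_nonempty a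
  | succ i ih => exact reachableColors_succ_nonempty (hℓ i hi) (ih (by omega))

theorem reachableColors_nontrivial_of_le {i j : ℕ} (hij : i ≤ j) (hj : j ≤ n)
    (h : (reachableColors ℓ a b i).Nontrivial) : (reachableColors ℓ a b j).Nontrivial := by
  induction j, hij using Nat.le_induction with
  | base => exact h
  | succ j _ ih => exact reachableColors_succ_nontrivial (hℓ j hj) (ih (by omega))

theorem exists_reachableColors_eq_singleton (hn : (reachableColors ℓ a b n).ncard = 1)
    {i : ℕ} (hi : i ≤ n) : ∃ x, reachableColors ℓ a b i = {x} := by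
  obtain ⟨x, hx⟩ := reachableColors_nonempty hℓ hi
  refine ⟨x, Set.Subsingleton.eq_singleton_of_mem ?_ hx⟩
  rw [← Set.not_nontrivial_iff]
  intro h
  obtain ⟨z, hz⟩ := Set.ncard_eq_one.mp hn
  have := reachableColors_nontrivial_of_le hℓ hi le_rfl h
  rw [hz] at this
  exact Set.not_nontrivial_singleton this

theorem exists_seq_of_reachableColors_ncard_eq_one (hn : (reachableColors ℓ a b n).ncard = 1) :
    ∃ c : ℕ → α, c 0 = a ∧ reachableColors ℓ a b n = {c n} ∧ ∀ i < n,
      (ℓ (i + 1) : Set α) = {b, c i, c (i + 1)} ∧ c (i + 1) ≠ b ∧ c (i + 1) ≠ c i := by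
  have : Nonempty α := ⟨a⟩
  choose! c hc using fun i (hi : i ≤ n) => exists_reachableColors_eq_singleton hℓ hn hi
  refine ⟨c, (Set.singleton_eq_singleton_iff.mp (hc 0 n.zero_le)).symm, hc n le_rfl,
    fun i hi => ?_⟩
  have hsucc : (ℓ (i + 1) : Set α) \ {b, c i} = {c (i + 1)} :=
    (reachableColors_succ_of_eq_singleton (hc i hi.le)).symm.trans (hc (i + 1) hi)
  have hmem : c (i + 1) ∈ (ℓ (i + 1) : Set α) \ {b, c i} := hsucc ▸ rfl
  simp only [Set.mem_sdiff, Finset.mem_coe, Set.mem_insert_iff, Set.mem_singleton_iff,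
    not_or] at hmem
  exact ⟨Finset.coe_eq_insert_of_sdiff_eq_singleton (hℓ i hi) hsucc, hmem.2⟩

end ReachableColors

/-- From a common colour `y ∉ {b₀, b₁}`, the list `{b₀, y, c} = {b₁, y, d}` forces `c = b₁` and
`d = b₀`; the next list `{b₀, b₁, x} = {b₁, b₀, x'}` then forces `x = x'`. -/
theorem even_eq_or_odd_swap_of_triples {α : Type*} {b₀ b₁ : α} (hb : b₀ ≠ b₁) {T : ℕ → Set α}
    {c d : ℕ → α} {n : ℕ} (h0 : c 0 = d 0) (hc0 : c 0 ≠ b₀) (hd0 : d 0 ≠ b₁)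
    (hc : ∀ i < n, T (i + 1) = {b₀, c i, c (i + 1)} ∧ c (i + 1) ≠ b₀ ∧ c (i + 1) ≠ c i)
    (hd : ∀ i < n, T (i + 1) = {b₁, d i, d (i + 1)} ∧ d (i + 1) ≠ b₁ ∧ d (i + 1) ≠ d i)
    {i : ℕ} (hi : i ≤ n) :
    (Even i ∧ c i = d i ∧ c i ≠ b₀ ∧ c i ≠ b₁) ∨ (Odd i ∧ c i = b₁ ∧ d i = b₀) := by
  induction i with
  | zero => exact Or.inl ⟨Even.zero, h0, hc0, h0 ▸ hd0⟩
  | succ i ih =>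
    obtain ⟨hTc, hcb, hcc⟩ := hc i hi
    obtain ⟨hTd, hdb, hdd⟩ := hd i hi
    have hT := Set.ext_iff.mp (hTc.symm.trans hTd)
    simp only [Set.mem_insert_iff, Set.mem_singleton_iff] at hT
    rcases ih (by omega) with ⟨he, hcd, hcb₀, hcb₁⟩ | ⟨ho, hcb₁, hdb₀⟩
    · have := hT b₀
      have := hT b₁
      exact Or.inr ⟨he.add_one, by grind, by grind⟩
    · have := hT (c (i + 1))
      exact Or.inl ⟨ho.add_one, by grind, hcb, by grind⟩

/-- The lists along `p u₁ … u_t p''`, indexed by position; empty past `p''`. -/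
def pathLists (t : ℕ) (L : BWVert t → Finset ℕ) (i : ℕ) : Finset ℕ :=
  if h : i < t + 2 then L (some ⟨i, h⟩) else ∅

section BrokenWheel

variable {t : ℕ} {L : BWVert t → Finset ℕ} {a b : ℕ}

theorem pathLists_of_lt {i : ℕ} (h : i < t + 2) : pathLists t L i = L (some ⟨i, h⟩) := dif_pos h

theorem Lambda_subset_reachableColors :
    Lambda t L a b ⊆ reachableColors (pathLists t L) a b (t + 1) := by
  rintro _ ⟨c, ⟨hmem, hadj⟩, h0, hhub, rfl⟩
  have hpath : ∀ i (hi : i < t + 2), c (some ⟨i, hi⟩) ∈ reachableColors (pathLists t L) a b i := by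
    intro i
    induction i with
    | zero => exact fun _ => h0
    | succ i ih =>
      exact fun hi => ⟨(pathLists_of_lt hi).symm ▸ hmem _, hhub ▸ hadj _ none trivial,
        _, ih (by omega), hadj _ _ (Or.inl rfl)⟩
  exact hpath (t + 1) (by omega)

theorem reachableColors_subset_Lambda (ha : a ∈ L (some 0)) (hb : b ∈ L none) (hab : a ≠ b) :
    reachableColors (pathLists t L) a b (t + 1) ⊆ Lambda t L a b := by
  intro x hx
  obtain ⟨f, hfx, hf, hff⟩ := exists_seq_of_mem_reachableColors hx
  have hfL : ∀ k : Fin (t + 2), f k ∈ L (some k) ∧ f k ≠ b := fun k => by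
    simpa [pathLists_of_lt k.isLt] using
      reachableColors_subset (ha : a ∈ pathLists t L 0) hab k (hf k (by omega))
  refine ⟨fun v => v.elim b (f ·), ⟨?_, ?_⟩, hf 0 (Nat.zero_le _), rfl, hfx⟩
  · rintro (_ | k)
    exacts [hb, (hfL k).1]
  · rintro (_ | k) (_ | m) h
    · exact h.elim
    · exact (hfL m).2.symm
    · exact (hfL k).2
    · rcases h with h | h
      · simpa [← h] using hff k (by omega)
      · simpa [← h] using (hff m (by omega)).symm

theorem Lambda_eq_reachableColors (ha : a ∈ L (some 0)) (hb : b ∈ L none) (hab : a ≠ b) :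
    Lambda t L a b = reachableColors (pathLists t L) a b (t + 1) :=
  Lambda_subset_reachableColors.antisymm (reachableColors_subset_Lambda ha hb hab)

end BrokenWheel

theorem bwheel_same_p_diff_S_odd_general (t : ℕ) (L : BWVert t → Finset ℕ)
    (hL : ∀ v : BWVert t, v ≠ some 0 → v ≠ none → 3 ≤ (L v).card)
    (a₀ b₀ a₁ b₁ : ℕ)
    (ha₀ : a₀ ∈ L (some 0)) (hb₀ : b₀ ∈ L none) (hne₀ : a₀ ≠ b₀)
    (ha₁ : a₁ ∈ L (some 0)) (hb₁ : b₁ ∈ L none) (hne₁ : a₁ ≠ b₁)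
    (hS₀ : (Lambda t L a₀ b₀).ncard = 1) (hS₁ : (Lambda t L a₁ b₁).ncard = 1)
    (hp : a₀ = a₁) (hS : Lambda t L a₀ b₀ ≠ Lambda t L a₁ b₁) :
    Odd (t + 1) ∧ Lambda t L a₀ b₀ = {b₁} ∧ Lambda t L a₁ b₁ = {b₀} := by
  subst hp
  have hb : b₀ ≠ b₁ := by rintro rfl; exact hS rfl
  have hℓ : ∀ i < t + 1, 3 ≤ (pathLists t L (i + 1)).card := fun i hi => by
    rw [pathLists_of_lt (by omega)]
    exact hL _ (by simp [Fin.ext_iff]) (Option.some_ne_none _)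
  rw [Lambda_eq_reachableColors ha₀ hb₀ hne₀] at hS₀ hS ⊢
  rw [Lambda_eq_reachableColors ha₁ hb₁ hne₁] at hS₁ hS ⊢
  obtain ⟨c, hc0, hc, hc_step⟩ := exists_seq_of_reachableColors_ncard_eq_one hℓ hS₀
  obtain ⟨d, hd0, hd, hd_step⟩ := exists_seq_of_reachableColors_ncard_eq_one hℓ hS₁
  rw [hc, hd] at hS ⊢
  rcases even_eq_or_odd_swap_of_triples (T := fun i => pathLists t L i) hb (hc0.trans hd0.symm)
    (hc0 ▸ hne₀) (hd0 ▸ hne₁) hc_step hd_step le_rfl with ⟨-, hcd, -⟩ | ⟨hodd, hcb, hdb⟩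
  · exact absurd (congrArg _ hcd) hS
  · exact ⟨hodd, by rw [hcb], by rw [hdb]⟩

/-- Theorem 2.4(1)(B): if `φ₀, φ₁` are distinct `L`-colorings of the edge `pp'` with
`|S₀| = |S₁| = 1`, `φ₀(p) = φ₁(p)` and `S₀ ≠ S₁`, then the path `G - p'` has an odd
number of edges and `S₀ = {φ₁(p')}`, `S₁ = {φ₀(p')}`. -/
theorem bwheel_same_p_diff_S_odd (t : ℕ) (L : BWVert t → Finset ℕ)
    (hL : ∀ v : BWVert t, v ≠ some 0 → v ≠ none → 3 ≤ (L v).card)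
    (a₀ b₀ a₁ b₁ : ℕ)
    (ha₀ : a₀ ∈ L (some 0)) (hb₀ : b₀ ∈ L none) (hne₀ : a₀ ≠ b₀)
    (ha₁ : a₁ ∈ L (some 0)) (hb₁ : b₁ ∈ L none) (hne₁ : a₁ ≠ b₁)
    (hdistinct : (a₀, b₀) ≠ (a₁, b₁))
    (hS₀ : (Lambda t L a₀ b₀).ncard = 1) (hS₁ : (Lambda t L a₁ b₁).ncard = 1)
    (hp : a₀ = a₁) (hS : Lambda t L a₀ b₀ ≠ Lambda t L a₁ b₁) :
    Odd (t + 1) ∧ Lambda t L a₀ b₀ = {b₁} ∧ Lambda t L a₁ b₁ = {b₀} :=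
  bwheel_same_p_diff_S_odd_general t L hL a₀ b₀ a₁ b₁ ha₀ hb₀ hne₀ ha₁ hb₁ hne₁ hS₀ hS₁ hp hS
end

section
/- Let G be a broken wheel with principal path P = p p' p'' and let L be a list-assignment for G with |L(v)| ≥ 3 for every vertex v ∈ V(G) \ {p, p'}. Let φ₀ and φ₁ be two distinct L-colorings of the edge pp', and for i = 0, 1 set Sᵢ := Λ_G(φᵢ(p), φᵢ(p'), •); suppose |S₀| = |S₁| = 1. If φ₀(p) ≠ φ₁(p) and S₀ = S₁, then the path G − p' has an odd number of edges and (φ₀(p), φ₀(p')) = (φ₁(p'), φ₁(p)). -/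
/-!
Color the path `p u₁ … u_t p''` from `p` onwards. The hub color `b` is banned everywhere, so
with lists of size at least three the set of colors reachable at a path vertex never shrinks to
empty, and once it has two elements it keeps two. Hence `|Λ| = 1` forces a unique coloring `r`
of the path with `L(uᵢ) = {b, r(i-1), r(i)}` at every step. Reading two such forced colorings
`r, s` backwards from the common end color, the triple equalities
`{b₀, r(i-1), r(i)} = {b₁, s(i-1), s(i)}` leave only two states: `r(i) = s(i)`, or
`r(i) = b₁, s(i) = b₀`, and for `b₀ ≠ b₁` these alternate. Since `r(0) ≠ s(0)`, the start is in
the swapped state, at odd distance from the end; and `b₀ = b₁` is excluded because then the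
backward reading would give `r(0) = s(0)`.
-/

open Finset

namespace BrokenWheel

section Triples

variable {α : Type*} [DecidableEq α]

theorem ne_of_three_le_card_triple {x y z : α} (h : 3 ≤ #({x, y, z} : Finset α)) :
    x ≠ y ∧ x ≠ z ∧ y ≠ z := by
  refine ⟨?_, ?_, ?_⟩ <;> rintro rfl <;>
    simp only [mem_insert, mem_singleton, true_or, or_true, insert_eq_of_mem] at h <;>
    exact absurd (h.trans card_le_two) (by norm_num)

theorem mid_eq_of_triple_eq_triple {b x y z : α} (h3 : 3 ≤ #({b, x, z} : Finset α))
    (h : ({b, x, z} : Finset α) = {b, y, z}) : x = y := by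
  have hx : x ∈ ({b, y, z} : Finset α) := h ▸ by simp
  have := ne_of_three_le_card_triple h3
  simp only [mem_insert, mem_singleton] at hx
  grind

theorem mid_swap_of_triple_eq_triple {b₀ b₁ x y z : α} (hb : b₀ ≠ b₁)
    (h3₀ : 3 ≤ #({b₀, x, z} : Finset α)) (h3₁ : 3 ≤ #({b₁, y, z} : Finset α))
    (h : ({b₀, x, z} : Finset α) = {b₁, y, z}) : x = b₁ ∧ y = b₀ := by
  have hx : b₁ ∈ ({b₀, x, z} : Finset α) := h ▸ by simp
  have hy : b₀ ∈ ({b₁, y, z} : Finset α) := h ▸ by simp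
  have := ne_of_three_le_card_triple h3₀
  have := ne_of_three_le_card_triple h3₁
  simp only [mem_insert, mem_singleton] at hx hy
  grind

theorem mid_eq_of_triple_eq_triple_swap {b₀ b₁ x y : α} (h3 : 3 ≤ #({b₀, x, b₁} : Finset α))
    (h : ({b₀, x, b₁} : Finset α) = {b₁, y, b₀}) : x = y := by
  have hx : x ∈ ({b₁, y, b₀} : Finset α) := h ▸ by simp
  have := ne_of_three_le_card_triple h3
  simp only [mem_insert, mem_singleton] at hx
  grind

end Triples

section PathColorings

variable (M : ℕ → Finset ℕ) (a b : ℕ)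

/-- `M i` is the list of the `i`-th path vertex, `a` the color of `p` and `b` the hub color. -/
def IsPathColoring (n : ℕ) (d : ℕ → ℕ) : Prop :=
  d 0 = a ∧ ∀ j < n, d (j + 1) ∈ M (j + 1) ∧ d (j + 1) ≠ b ∧ d j ≠ d (j + 1)

def pathEndColors (n : ℕ) : Set ℕ :=
  {x | ∃ d, IsPathColoring M a b n d ∧ d n = x}

variable {M a b}

theorem IsPathColoring.of_succ {n : ℕ} {d : ℕ → ℕ} (h : IsPathColoring M a b (n + 1) d) :
    IsPathColoring M a b n d :=
  ⟨h.1, fun j hj => h.2 j (by omega)⟩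

theorem pathEndColors_zero : pathEndColors M a b 0 = {a} := by
  ext x
  exact ⟨fun ⟨d, hd, hx⟩ => hx ▸ hd.1, fun hx => ⟨fun _ => a, ⟨rfl, by simp⟩, hx.symm⟩⟩

theorem mem_pathEndColors_succ {n x : ℕ} :
    x ∈ pathEndColors M a b (n + 1) ↔
      x ∈ M (n + 1) ∧ x ≠ b ∧ ∃ y ∈ pathEndColors M a b n, y ≠ x := by
  constructor
  · rintro ⟨d, hd, rfl⟩
    obtain ⟨hmem, hb, hne⟩ := hd.2 n n.lt_succ_self
    exact ⟨hmem, hb, d n, ⟨d, hd.of_succ, rfl⟩, hne⟩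
  · rintro ⟨hmem, hb, y, ⟨d, hd, rfl⟩, hne⟩
    refine ⟨Function.update d (n + 1) x, ⟨by simp [hd.1], fun j hj => ?_⟩, by simp⟩
    rcases Nat.lt_succ_iff_lt_or_eq.mp hj with hj | rfl
    · simpa [Function.update_of_ne (show j ≠ n + 1 by omega),
        Function.update_of_ne (show j + 1 ≠ n + 1 by omega)] using hd.2 j hj
    · simpa [Function.update_of_ne (show j ≠ j + 1 by omega)] using ⟨hmem, hb, hne⟩

theorem sdiff_subset_pathEndColors_succ {n y : ℕ} (hy : y ∈ pathEndColors M a b n) :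
    (↑(M (n + 1) \ {b, y}) : Set ℕ) ⊆ pathEndColors M a b (n + 1) := by
  intro x hx
  rw [mem_coe, mem_sdiff, mem_insert, mem_singleton, not_or] at hx
  exact mem_pathEndColors_succ.mpr ⟨hx.1, hx.2.1, y, hy, Ne.symm hx.2.2⟩

theorem erase_subset_pathEndColors_succ {n : ℕ} (h : (pathEndColors M a b n).Nontrivial) :
    (↑((M (n + 1)).erase b) : Set ℕ) ⊆ pathEndColors M a b (n + 1) := by
  intro x hx
  obtain ⟨y, hy, hyx⟩ := h.exists_ne x
  rw [mem_coe, mem_erase] at hx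
  exact mem_pathEndColors_succ.mpr ⟨hx.2, hx.1, y, hy, hyx⟩

theorem pathEndColors_nonempty {n : ℕ} (h3 : ∀ i < n, 3 ≤ #(M (i + 1))) :
    (pathEndColors M a b n).Nonempty := by
  induction n with
  | zero => simp [pathEndColors_zero]
  | succ n ih =>
    obtain ⟨y, hy⟩ := ih fun i hi => h3 i (by omega)
    have hcard : 0 < #(M (n + 1) \ {b, y}) :=
      calc 0 < #(M (n + 1)) - #({b, y} : Finset ℕ) := by
              have := h3 n n.lt_succ_self
              have := card_le_two (a := b) (b := y)
              omega
        _ ≤ _ := le_card_sdiff _ _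
    exact ((coe_nonempty.mpr (card_pos.mp hcard)).mono (sdiff_subset_pathEndColors_succ hy))

theorem pathEndColors_nontrivial_succ {n : ℕ} (h3 : 3 ≤ #(M (n + 1)))
    (h : (pathEndColors M a b n).Nontrivial) : (pathEndColors M a b (n + 1)).Nontrivial := by
  have hcard : 1 < #((M (n + 1)).erase b) := by
    have := pred_card_le_card_erase (a := b) (s := M (n + 1))
    omega
  exact (one_lt_card_iff_nontrivial.mp hcard).coe.mono (erase_subset_pathEndColors_succ h)

theorem pathEndColors_subsingleton_of_le {m n : ℕ} (h3 : ∀ i < n, 3 ≤ #(M (i + 1)))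
    (hsub : (pathEndColors M a b n).Subsingleton) (hm : m ≤ n) :
    (pathEndColors M a b m).Subsingleton := by
  refine Nat.decreasingInduction (motive := fun m _ => (pathEndColors M a b m).Subsingleton)
    (fun k hk ih => ?_) hsub hm
  exact Set.not_nontrivial_iff.mp fun h => Set.not_nontrivial_iff.mpr ih
    (pathEndColors_nontrivial_succ (h3 k hk) h)

theorem exists_forced_of_subsingleton {n : ℕ} (h3 : ∀ i < n, 3 ≤ #(M (i + 1)))
    (hsub : (pathEndColors M a b n).Subsingleton) :
    ∃ r : ℕ → ℕ, r 0 = a ∧ pathEndColors M a b n = {r n} ∧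
      ∀ i < n, M (i + 1) = {b, r i, r (i + 1)} := by
  have hsingle : ∀ m, ∃ x, m ≤ n → pathEndColors M a b m = {x} := by
    intro m
    by_cases hm : m ≤ n
    · obtain ⟨x, hx⟩ :=
        pathEndColors_nonempty (a := a) (b := b) (n := m) fun i hi => h3 i (by omega)
      exact ⟨x, fun _ => (pathEndColors_subsingleton_of_le h3 hsub hm).eq_singleton_of_mem hx⟩
    · exact ⟨0, fun h => absurd h hm⟩
  choose r hr using hsingle
  refine ⟨r, ?_, hr n le_rfl, fun i hi => ?_⟩
  · have := hr 0 n.zero_le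
    rw [pathEndColors_zero] at this
    exact (Set.singleton_eq_singleton_iff.mp this).symm
  · refine eq_of_subset_of_card_le (fun x hx => ?_) (card_le_three.trans (h3 i hi))
    by_cases hx' : x ∈ ({b, r i} : Finset ℕ)
    · simp only [mem_insert, mem_singleton] at hx' ⊢
      tauto
    · have hri : r i ∈ pathEndColors M a b i := by rw [hr i hi.le]; rfl
      have := sdiff_subset_pathEndColors_succ hri (mem_sdiff.mpr ⟨hx, hx'⟩)
      rw [hr (i + 1) hi] at this
      simp [Set.mem_singleton_iff.mp this]

end PathColorings

section ForcedColorings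

variable {M : ℕ → Finset ℕ} {n : ℕ} {r s : ℕ → ℕ}

theorem start_eq_of_forced_of_end_eq {b : ℕ} (h3 : ∀ i < n, 3 ≤ #(M (i + 1)))
    (hr : ∀ i < n, M (i + 1) = {b, r i, r (i + 1)})
    (hs : ∀ i < n, M (i + 1) = {b, s i, s (i + 1)}) (hend : r n = s n) : r 0 = s 0 := by
  refine Nat.decreasingInduction (motive := fun m _ => r m = s m)
    (fun k hk ih => ?_) hend n.zero_le
  refine mid_eq_of_triple_eq_triple (hr k hk ▸ h3 k hk) ((hr k hk).symm.trans ?_)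
  rw [hs k hk, ih]

theorem odd_of_forced_of_start_ne {b₀ b₁ : ℕ} (h3 : ∀ i < n, 3 ≤ #(M (i + 1)))
    (hr : ∀ i < n, M (i + 1) = {b₀, r i, r (i + 1)})
    (hs : ∀ i < n, M (i + 1) = {b₁, s i, s (i + 1)}) (hend : r n = s n) (hstart : r 0 ≠ s 0) :
    Odd n ∧ r 0 = b₁ ∧ s 0 = b₀ := by
  have hb : b₀ ≠ b₁ := by
    rintro rfl
    exact hstart (start_eq_of_forced_of_end_eq h3 hr hs hend)
  have hstate : ∀ m ≤ n,
      (r m = s m ∧ Even (n - m)) ∨ (r m = b₁ ∧ s m = b₀ ∧ Odd (n - m)) := by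
    intro m hm
    refine Nat.decreasingInduction (fun k hk ih => ?_) (Or.inl ⟨hend, by simp⟩) hm
    have hdist : n - k = n - (k + 1) + 1 := by omega
    rw [hdist]
    have h3r := hr k hk ▸ h3 k hk
    have h3s := hs k hk ▸ h3 k hk
    have htriple := (hr k hk).symm.trans (hs k hk)
    rcases ih with ⟨heq, heven⟩ | ⟨hrb, hsb, hodd⟩
    · rw [heq] at htriple h3r
      obtain ⟨hrk, hsk⟩ := mid_swap_of_triple_eq_triple hb h3r h3s htriple
      exact Or.inr ⟨hrk, hsk, heven.add_one⟩
    · rw [hrb, hsb] at htriple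
      rw [hrb] at h3r
      exact Or.inl ⟨mid_eq_of_triple_eq_triple_swap h3r htriple, hodd.add_one⟩
  rcases hstate 0 n.zero_le with ⟨h, -⟩ | ⟨h₀, h₁, hodd⟩
  · exact absurd h hstart
  · exact ⟨by simpa using hodd, h₀, h₁⟩

end ForcedColorings

open Fin.NatCast

/-- Indices past `t + 1` wrap around modulo `t + 2`; only `i ≤ t + 1` is ever used. -/
def pathLists {t : ℕ} (L : BWVert t → Finset ℕ) (i : ℕ) : Finset ℕ :=
  L (some (i : Fin (t + 2)))

variable {t : ℕ} {L : BWVert t → Finset ℕ}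

theorem three_le_card_pathLists (hL : ∀ v : BWVert t, v ≠ some 0 → v ≠ none → 3 ≤ (L v).card) :
    ∀ i < t + 1, 3 ≤ #(pathLists L (i + 1)) := by
  intro i hi
  refine hL _ (fun h => ?_) (Option.some_ne_none _)
  have := congrArg Fin.val (Option.some_injective _ h)
  rw [Fin.val_cast_of_lt (by omega)] at this
  simp at this

theorem isPathColoring_of_isBWColoring {a b : ℕ} {c : BWVert t → ℕ} (hc : IsBWColoring t L c)
    (hp : c (some 0) = a) (hhub : c none = b) :
    IsPathColoring (pathLists L) a b (t + 1) fun i => c (some i) := by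
  refine ⟨by simpa using hp, fun j hj => ⟨hc.1 _, hhub ▸ hc.2 _ _ trivial, hc.2 _ _ ?_⟩⟩
  left
  rw [Fin.val_cast_of_lt (by omega), Fin.val_cast_of_lt (by omega)]

theorem isBWColoring_of_isPathColoring {a b : ℕ} {d : ℕ → ℕ} (ha : a ∈ L (some 0))
    (hb : b ∈ L none) (hab : a ≠ b) (hd : IsPathColoring (pathLists L) a b (t + 1) d) :
    IsBWColoring t L fun v => v.elim b fun i => d i := by
  have hvert : ∀ i : Fin (t + 2), d i ∈ L (some i) ∧ d i ≠ b := by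
    rintro ⟨_ | j, hj⟩
    · exact hd.1 ▸ ⟨by simpa using ha, hab⟩
    · have := hd.2 j (by omega)
      rw [pathLists, Fin.cast_val_eq_self ⟨j + 1, hj⟩] at this
      exact ⟨this.1, this.2.1⟩
  refine ⟨fun v => ?_, ?_⟩
  · cases v with
    | none => exact hb
    | some i => exact (hvert i).1
  · rintro (_ | i) (_ | j) hadj
    · exact hadj.elim
    · exact (hvert j).2.symm
    · exact (hvert i).2
    · rcases hadj with h | h
      · simpa [← h] using (hd.2 i (by omega)).2.2
      · simpa [← h] using ((hd.2 j (by omega)).2.2).symm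

theorem lambda_eq_pathEndColors {a b : ℕ} (ha : a ∈ L (some 0)) (hb : b ∈ L none)
    (hab : a ≠ b) : Lambda t L a b = pathEndColors (pathLists L) a b (t + 1) := by
  ext x
  constructor
  · rintro ⟨c, hc, hp, hhub, rfl⟩
    exact ⟨_, isPathColoring_of_isBWColoring hc hp hhub,
      congrArg (fun i => c (some i)) (Fin.natCast_eq_last _)⟩
  · rintro ⟨d, hd, rfl⟩
    exact ⟨_, isBWColoring_of_isPathColoring ha hb hab hd, by simpa using hd.1, rfl, by simp⟩

end BrokenWheel

open BrokenWheel

theorem bwheel_diff_p_same_S_odd_general (t : ℕ) (L : BWVert t → Finset ℕ)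
    (hL : ∀ v : BWVert t, v ≠ some 0 → v ≠ none → 3 ≤ (L v).card)
    (a₀ b₀ a₁ b₁ : ℕ)
    (ha₀ : a₀ ∈ L (some 0)) (hb₀ : b₀ ∈ L none) (hne₀ : a₀ ≠ b₀)
    (ha₁ : a₁ ∈ L (some 0)) (hb₁ : b₁ ∈ L none) (hne₁ : a₁ ≠ b₁)
    (hS₀ : (Lambda t L a₀ b₀).ncard = 1) (hS₁ : (Lambda t L a₁ b₁).ncard = 1)
    (hp : a₀ ≠ a₁) (hS : Lambda t L a₀ b₀ = Lambda t L a₁ b₁) :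
    Odd (t + 1) ∧ a₀ = b₁ ∧ b₀ = a₁ := by
  have h3 := three_le_card_pathLists hL
  rw [lambda_eq_pathEndColors ha₀ hb₀ hne₀] at hS₀ hS
  rw [lambda_eq_pathEndColors ha₁ hb₁ hne₁] at hS₁ hS
  obtain ⟨r, hr0, hrn, hr⟩ := exists_forced_of_subsingleton h3
    ((Set.ncard_eq_one.mp hS₀).elim fun _ hx => hx ▸ Set.subsingleton_singleton)
  obtain ⟨s, hs0, hsn, hs⟩ := exists_forced_of_subsingleton h3
    ((Set.ncard_eq_one.mp hS₁).elim fun _ hx => hx ▸ Set.subsingleton_singleton)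
  have hend : r (t + 1) = s (t + 1) :=
    Set.singleton_eq_singleton_iff.mp (hrn.symm.trans (hS.trans hsn))
  obtain ⟨hodd, h₀, h₁⟩ := odd_of_forced_of_start_ne h3 hr hs hend (by rwa [hr0, hs0])
  exact ⟨hodd, hr0 ▸ h₀, (hs0 ▸ h₁).symm⟩

/-- Theorem 2.4(1)(C): if `φ₀, φ₁` are distinct `L`-colorings of the edge `pp'` with
`|S₀| = |S₁| = 1`, `φ₀(p) ≠ φ₁(p)` and `S₀ = S₁`, then the path `G - p'` has an odd
number of edges and `(φ₀(p), φ₀(p')) = (φ₁(p'), φ₁(p))`. -/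
theorem bwheel_diff_p_same_S_odd (t : ℕ) (L : BWVert t → Finset ℕ)
    (hL : ∀ v : BWVert t, v ≠ some 0 → v ≠ none → 3 ≤ (L v).card)
    (a₀ b₀ a₁ b₁ : ℕ)
    (ha₀ : a₀ ∈ L (some 0)) (hb₀ : b₀ ∈ L none) (hne₀ : a₀ ≠ b₀)
    (ha₁ : a₁ ∈ L (some 0)) (hb₁ : b₁ ∈ L none) (hne₁ : a₁ ≠ b₁)
    (hdistinct : (a₀, b₀) ≠ (a₁, b₁))
    (hS₀ : (Lambda t L a₀ b₀).ncard = 1) (hS₁ : (Lambda t L a₁ b₁).ncard = 1)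
    (hp : a₀ ≠ a₁) (hS : Lambda t L a₀ b₀ = Lambda t L a₁ b₁) :
    Odd (t + 1) ∧ a₀ = b₁ ∧ b₀ = a₁ :=
  bwheel_diff_p_same_S_odd_general t L hL a₀ b₀ a₁ b₁ ha₀ hb₀ hne₀ ha₁ hb₁ hne₁ hS₀ hS₁ hp hS
end

section
/- Let G be a broken wheel with principal path P = p p' p'' and let L be a list-assignment for G with |L(v)| ≥ 3 for every vertex v ∈ V(G) \ {p, p'}. Suppose |V(G)| ≥ 4, write G − p' = p u₁ … u_t p'' (so t ≥ 1), let x be the unique vertex at distance two from p on the path G − p' (so x = u₂ if t ≥ 2 and x = p'' if t = 1), and let a ∈ L(p) be a color such that L(u₁) \ {a} is not contained in L(x). Then a is almost (P, G)-universal, i.e., for every b ∈ L(p') \ {a} one has |Λ_G(a, b, •)| ≥ |L(p'')| − 1. -/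
/-!
Give `p'` the color `b` and `u₁` a color `z ∉ {a, b}`, chosen so that `b` and `z` are not
both in `L(x)`; this is possible because some color of `L(u₁) \ {a}` is missing from `L(x)`.
Every vertex `u₂, …, p''` must avoid `b`, and `x` must also avoid `z`, so each of them keeps
at least `|L| - 1` colors, that is at least two colors except possibly at `p''`. Hence every
color left at `p''` extends greedily backwards along the path, towards `u₁`.
-/

theorem exists_path_coloring_ending_at {α : Type*} (f : ℕ → Finset α) {m n : ℕ}
    (hf : ∀ i, m ≤ i → i < n → 2 ≤ (f i).card) {x : α} (hx : x ∈ f n) :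
    ∃ g : ℕ → α, g n = x ∧ (∀ i, m ≤ i → i ≤ n → g i ∈ f i) ∧
      ∀ i, m ≤ i → i < n → g i ≠ g (i + 1) := by
  induction n generalizing x with
  | zero =>
    refine ⟨fun _ => x, rfl, fun i _ hi => ?_, fun i _ hi => absurd hi (Nat.not_lt_zero i)⟩
    rwa [Nat.le_zero.mp hi]
  | succ n ih =>
    by_cases hmn : m ≤ n
    · obtain ⟨y, hy, hyx⟩ := Finset.exists_mem_ne (hf n hmn n.lt_succ_self) x
      obtain ⟨g, hgy, hgmem, hgne⟩ := ih (fun i hm hi => hf i hm (by omega)) hy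
      refine ⟨Function.update g (n + 1) x, by simp, fun i hm hi => ?_, fun i hm hi => ?_⟩
      · rcases Nat.lt_or_eq_of_le hi with hi | rfl
        · rw [Function.update_of_ne (by omega)]
          exact hgmem i hm (by omega)
        · simpa using hx
      · rw [Function.update_of_ne (by omega)]
        rcases Nat.lt_or_eq_of_le (Nat.le_of_lt_succ hi) with hi | rfl
        · rw [Function.update_of_ne (by omega)]
          exact hgne i hm hi
        · simpa [hgy] using hyx
    · refine ⟨fun _ => x, rfl, fun i hm hi => ?_, fun i hm hi => by omega⟩
      obtain rfl : i = n + 1 := by omega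
      exact hx

theorem exists_mem_ne_ne_of_not_sdiff_subset {α : Type*} [DecidableEq α] {s u : Finset α}
    (hs : 3 ≤ s.card) {a : α} (h : ¬ s \ {a} ⊆ u) (b : α) :
    ∃ z ∈ s, z ≠ a ∧ z ≠ b ∧ (b ∉ u ∨ z ∉ u) := by
  obtain ⟨d, hd, hdu⟩ := Finset.not_subset.mp h
  rw [Finset.mem_sdiff, Finset.mem_singleton] at hd
  by_cases hdb : d = b
  · have : 0 < (s \ {a, b}).card :=
      calc 0 < s.card - ({a, b} : Finset α).card := by
            have := Finset.card_le_two (a := a) (b := b)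
            omega
        _ ≤ (s \ {a, b}).card := Finset.le_card_sdiff _ _
    obtain ⟨z, hz⟩ := Finset.card_pos.mp this
    simp only [Finset.mem_sdiff, Finset.mem_insert, Finset.mem_singleton, not_or] at hz
    exact ⟨z, hz.1, hz.2.1, hz.2.2, Or.inl (hdb ▸ hdu)⟩
  · exact ⟨d, hd.1, hd.2, hdb, Or.inr hdu⟩

theorem Finset.card_sub_one_le_card_sdiff_pair {α : Type*} [DecidableEq α] {s : Finset α}
    {b z : α} (h : b ∉ s ∨ z ∉ s) : s.card - 1 ≤ (s \ {b, z}).card := by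
  rcases h with h | h
  · rw [Finset.sdiff_insert_of_notMem h, Finset.sdiff_singleton_eq_erase]
    exact Finset.pred_card_le_card_erase
  · rw [Finset.pair_comm, Finset.sdiff_insert_of_notMem h, Finset.sdiff_singleton_eq_erase]
    exact Finset.pred_card_le_card_erase

section BrokenWheel

open Fin.NatCast

variable {t : ℕ} {L : BWVert t → Finset ℕ}

theorem Lambda_subset (a b : ℕ) : Lambda t L a b ⊆ ↑(L (some (Fin.last (t + 1)))) := by
  rintro x ⟨c, ⟨hmem, -⟩, -, -, rfl⟩
  exact hmem _

theorem isBWColoring_of_path {b : ℕ} (hb : b ∈ L none) (h : ℕ → ℕ)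
    (hmem : ∀ i : Fin (t + 2), h i ∈ L (some i)) (hhub : ∀ i : Fin (t + 2), h i ≠ b)
    (hpath : ∀ i ≤ t, h i ≠ h (i + 1)) :
    IsBWColoring t L (fun v => v.elim b fun i => h i) := by
  refine ⟨fun v => ?_, fun v w hvw => ?_⟩
  · cases v with
    | none => exact hb
    | some i => exact hmem i
  · rcases v with _ | i <;> rcases w with _ | j
    · exact hvw.elim
    · exact (hhub j).symm
    · exact hhub i
    · rcases hvw with hij | hij
      · simpa [← hij] using hpath i (by omega)
      · simpa [← hij] using (hpath j (by omega)).symm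

variable (L) in
/-- The colors still available at the path vertex of index `i ≥ 2` once `p'` has color `b`
and `u₁` has color `z`. -/
def freeColors (b z i : ℕ) : Finset ℕ :=
  if i = 2 then L (some (i : Fin (t + 2))) \ {b, z} else (L (some (i : Fin (t + 2)))).erase b

theorem freeColors_subset_erase (b z i : ℕ) :
    freeColors L b z i ⊆ (L (some (i : Fin (t + 2)))).erase b := by
  unfold freeColors
  split_ifs
  · intro c hc
    simp only [Finset.mem_sdiff, Finset.mem_insert, Finset.mem_singleton, not_or] at hc
    exact Finset.mem_erase.mpr ⟨hc.2.1, hc.1⟩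
  · exact subset_rfl

theorem notMem_freeColors_two (b z : ℕ) : z ∉ freeColors L b z 2 := by
  simp [freeColors]

theorem card_le_card_freeColors_add_one {b z : ℕ}
    (hbz : b ∉ L (some 2) ∨ z ∉ L (some 2)) (i : ℕ) :
    (L (some (i : Fin (t + 2)))).card - 1 ≤ (freeColors L b z i).card := by
  unfold freeColors
  split_ifs with hi
  · subst hi
    rw [Nat.cast_ofNat]
    exact Finset.card_sub_one_le_card_sdiff_pair hbz
  · exact Finset.pred_card_le_card_erase

theorem two_le_card_freeColors
    (hL : ∀ v : BWVert t, v ≠ some 0 → v ≠ none → 3 ≤ (L v).card) {b z : ℕ}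
    (hbz : b ∉ L (some 2) ∨ z ∉ L (some 2)) {i : ℕ} (h2 : 2 ≤ i)
    (hi : i ≤ t) : 2 ≤ (freeColors L b z i).card := by
  have hL3 := hL (some (i : Fin (t + 2)))
    (by simp [Fin.ext_iff, Fin.val_natCast, Nat.mod_eq_of_lt (show i < t + 2 by omega)]; omega)
    (by simp)
  have := card_le_card_freeColors_add_one hbz i
  omega

theorem mem_Lambda_of_mem_freeColors (ht : 1 ≤ t) {a b z x : ℕ} (ha : a ∈ L (some 0))
    (hb : b ∈ L none) (hab : a ≠ b) (hz : z ∈ L (some 1)) (hza : z ≠ a) (hzb : z ≠ b)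
    (hfree : ∀ i, 2 ≤ i → i ≤ t → 2 ≤ (freeColors L b z i).card)
    (hx : x ∈ freeColors L b z (t + 1)) : x ∈ Lambda t L a b := by
  obtain ⟨g, hgx, hgmem, hgne⟩ :=
    exists_path_coloring_ending_at _ (fun i h2 hi => hfree i h2 (by omega)) hx
  have hg : ∀ i : Fin (t + 2), 2 ≤ (i : ℕ) → g i ∈ L (some i) ∧ g i ≠ b := fun i h2 => by
    have := freeColors_subset_erase b z i (hgmem i h2 (by omega))
    rw [Fin.cast_val_eq_self, Finset.mem_erase] at this
    exact this.symm
  set h : ℕ → ℕ := fun i => if i = 0 then a else if i = 1 then z else g i with h_def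
  refine ⟨fun v => v.elim b fun i => h i, isBWColoring_of_path hb h ?_ ?_ ?_, rfl, rfl, ?_⟩
  · rintro ⟨_ | _ | i, hi⟩
    · simpa [h_def] using ha
    · simpa [h_def] using hz
    · simpa [h_def] using (hg ⟨i + 2, hi⟩ (by simp)).1
  · rintro ⟨_ | _ | i, hi⟩
    · simpa [h_def] using hab
    · simpa [h_def] using hzb
    · simpa [h_def] using (hg ⟨i + 2, hi⟩ (by simp)).2
  · rintro (_ | _ | i) hi
    · simpa [h_def] using hza.symm
    · have : g 2 ≠ z := fun h => notMem_freeColors_two b z (h ▸ hgmem 2 le_rfl (by omega))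
      simpa [h_def] using this.symm
    · simpa [h_def] using hgne (i + 2) (by omega) (by omega)
  · have : t ≠ 0 := by omega
    simp [h_def, hgx, this]

theorem card_sub_one_le_ncard_Lambda (ht : 1 ≤ t)
    (hL : ∀ v : BWVert t, v ≠ some 0 → v ≠ none → 3 ≤ (L v).card) {a b z : ℕ}
    (ha : a ∈ L (some 0)) (hb : b ∈ L none) (hab : a ≠ b) (hz : z ∈ L (some 1)) (hza : z ≠ a)
    (hzb : z ≠ b) (hbz : b ∉ L (some 2) ∨ z ∉ L (some 2)) :
    (L (some (Fin.last (t + 1)))).card - 1 ≤ (Lambda t L a b).ncard := by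
  have hsub : ↑(freeColors L b z (t + 1)) ⊆ Lambda t L a b := fun x hx =>
    mem_Lambda_of_mem_freeColors ht ha hb hab hz hza hzb
      (fun _ => two_le_card_freeColors hL hbz) hx
  calc (L (some (Fin.last (t + 1)))).card - 1 ≤ (freeColors L b z (t + 1)).card := by
        simpa only [Fin.natCast_eq_last] using card_le_card_freeColors_add_one hbz (t + 1)
    _ = (↑(freeColors L b z (t + 1)) : Set ℕ).ncard := (Set.ncard_coe_finset _).symm
    _ ≤ (Lambda t L a b).ncard :=
        Set.ncard_le_ncard hsub ((L _).finite_toSet.subset (Lambda_subset a b))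

end BrokenWheel

/-- Theorem 2.4(3), first part: if `|V(G)| ≥ 4` (i.e. `t ≥ 1`), `x` is the vertex at
distance two from `p` on the path `G - p'` (the path vertex of index `2`, which is `u₂`
if `t ≥ 2` and `p''` if `t = 1`), and `a ∈ L(p)` satisfies `L(u₁) \ {a} ⊄ L(x)`, then
`a` is almost `(P, G)`-universal: for every `b ∈ L(p') \ {a}`,
`|Λ_G(a, b, •)| ≥ |L(p'')| - 1`. -/
theorem bwheel_almost_universal (t : ℕ) (ht : 1 ≤ t) (L : BWVert t → Finset ℕ)
    (hL : ∀ v : BWVert t, v ≠ some 0 → v ≠ none → 3 ≤ (L v).card)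
    (a : ℕ) (ha : a ∈ L (some 0))
    (hx : ¬ (L (some (1 : Fin (t + 2))) \ {a} ⊆ L (some (⟨2, by omega⟩ : Fin (t + 2))))) :
    ∀ b ∈ L (none : BWVert t), b ≠ a →
      (L (some (Fin.last (t + 1)))).card - 1 ≤ (Lambda t L a b).ncard := by
  intro b hb hba
  have htwo : (⟨2, by omega⟩ : Fin (t + 2)) = 2 := Fin.ext (Nat.mod_eq_of_lt (by omega)).symm
  rw [htwo] at hx
  obtain ⟨z, hz, hza, hzb, hbz⟩ :=
    exists_mem_ne_ne_of_not_sdiff_subset (hL _ (by simp) (by simp)) hx b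
  exact card_sub_one_le_ncard_Lambda ht hL ha hb hba.symm hz hza hzb hbz
end

section
/- Let G be a broken wheel with principal path P = p p' p'' and let L be a list-assignment for G with |L(v)| ≥ 3 for every vertex v ∈ V(G) \ {p, p'}. Suppose |V(G)| ≥ 5, write G − p' = p u₁ … u_t p'' (so t ≥ 2), let x = u₂ be the unique vertex at distance two from p on the path G − p', and let a ∈ L(p) be a color such that L(u₁) \ {a} is not contained in L(x). Then a is (P, G)-universal, i.e., for every b ∈ L(p') \ {a} and every c ∈ L(p'') \ {b}, there is an L-coloring of G using a, b, c on p, p', p'' respectively. -/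
/-!
Colour `p` with `a` and the hub `p'` with `b`; every other vertex must avoid `b`. Take
`d ∈ L(u₁) \ {a}` with `d ∉ L(u₂)` and reserve for `u₁` a colour `e ∈ L(u₁) \ {a, b}`
with `d ∈ {b, e}` (`e = d` unless `d = b`). Since `d ∉ L(u₂)`, removing `b` and `e` costs
`u₂` at most one colour, so each of `u₂, …, u_t` keeps at least two admissible colours and
the path `u₂ … u_t` can be coloured greedily backwards from the colour `c` of `p''`.
-/

open Finset Fin.NatCast

theorem Finset.card_add_one_le_card_sdiff_add_card {α : Type*} [DecidableEq α]
    {s u : Finset α} {d : α} (hdu : d ∈ u) (hds : d ∉ s) : #s + 1 ≤ #(s \ u) + #u := by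
  have hlt : #(u ∩ s) < #u :=
    card_lt_card ⟨inter_subset_left, fun h => hds (mem_inter.1 (h hdu)).2⟩
  have := card_le_card (inter_subset_right : u ∩ s ⊆ s)
  rw [card_sdiff]
  omega

theorem exists_path_coloring {α : Type*} (L : ℕ → Finset α) (g : ℕ → α) {lo n : ℕ}
    (hlo : lo ≤ n) (hL : ∀ k, lo ≤ k → k < n → 1 < #(L k)) :
    ∃ f : ℕ → α, (∀ k, k < lo ∨ n ≤ k → f k = g k) ∧
      ∀ k, lo ≤ k → k < n → f k ∈ L k ∧ f k ≠ f (k + 1) := by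
  classical
  induction hlo using Nat.decreasingInduction with
  | self => exact ⟨g, fun _ _ => rfl, fun k hk hkn => absurd hkn (by omega)⟩
  | of_succ lo hlo ih =>
    obtain ⟨f, hfg, hf⟩ := ih fun k hk hkn => hL k (by omega) hkn
    obtain ⟨x, hxL, hxf⟩ := exists_mem_ne (hL lo le_rfl hlo) (f (lo + 1))
    refine ⟨Function.update f lo x, fun k hk => ?_, fun k hk hkn => ?_⟩
    · rw [Function.update_of_ne (by omega)]
      exact hfg k (by omega)
    rw [Function.update_of_ne (show k + 1 ≠ lo by omega)]
    rcases hk.eq_or_lt with rfl | hk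
    · simpa using ⟨hxL, hxf⟩
    · rw [Function.update_of_ne (by omega)]
      exact hf k hk hkn

theorem exists_mem_sdiff_pair_and_mem_pair {α : Type*} [DecidableEq α] {s : Finset α}
    (hs : 3 ≤ #s) {a b d : α} (hds : d ∈ s) (hda : d ≠ a) :
    ∃ e ∈ s \ {a, b}, d ∈ ({b, e} : Finset α) := by
  by_cases hdb : d = b
  · have : 0 < #(s \ {a, b}) := by
      have := le_card_sdiff {a, b} s
      have := card_le_two (a := a) (b := b)
      omega
    obtain ⟨e, he⟩ := card_pos.mp this
    exact ⟨e, he, by simp [hdb]⟩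
  · exact ⟨d, by simp [hds, hda, hdb], by simp⟩

theorem exists_path_coloring_avoiding {α : Type*} [DecidableEq α] (ℓ : ℕ → Finset α)
    (g : ℕ → α) {n : ℕ} (hn : 2 ≤ n) (hℓ : ∀ k, 2 ≤ k → k < n → 3 ≤ #(ℓ k)) {b e d : α}
    (hd : d ∈ ({b, e} : Finset α)) (hd2 : d ∉ ℓ 2) :
    ∃ f : ℕ → α, (∀ k, k < 2 ∨ n ≤ k → f k = g k) ∧
      (∀ k, 2 ≤ k → k < n → f k ∈ ℓ k \ {b} ∧ f k ≠ f (k + 1)) ∧ (2 < n → f 2 ≠ e) := by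
  set ℓ' := fun k => if k = 2 then ℓ k \ {b, e} else ℓ k \ {b}
  obtain ⟨f, hfg, hf⟩ := exists_path_coloring ℓ' g hn fun k hk hkn => by
    have h3 := hℓ k hk hkn
    simp only [ℓ']
    split_ifs with hk2
    · subst hk2
      have := card_add_one_le_card_sdiff_add_card hd hd2
      have := card_le_two (a := b) (b := e)
      omega
    · have := le_card_sdiff {b} (ℓ k)
      rw [card_singleton] at this
      omega
  refine ⟨f, hfg, fun k hk hkn => ⟨?_, (hf k hk hkn).2⟩, fun hn2 => ?_⟩
  · have := (hf k hk hkn).1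
    simp only [ℓ'] at this
    split_ifs at this
    · exact sdiff_subset_sdiff le_rfl (by simp) this
    · exact this
  · have := (hf 2 le_rfl hn2).1
    simp only [ℓ', if_pos, mem_sdiff, mem_insert, mem_singleton, not_or] at this
    exact this.2.2

theorem exists_path_coloring_of_not_subset {α : Type*} [DecidableEq α] (ℓ : ℕ → Finset α)
    {n : ℕ} (hn : 3 ≤ n) (hℓ : ∀ k, 1 ≤ k → k ≤ n → 3 ≤ #(ℓ k)) {a b c : α}
    (ha : a ∈ ℓ 0) (hba : b ≠ a) (hc : c ∈ ℓ n) (hcb : c ≠ b) (hx : ¬ ℓ 1 \ {a} ⊆ ℓ 2) :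
    ∃ f : ℕ → α, f 0 = a ∧ f n = c ∧ (∀ k ≤ n, f k ∈ ℓ k ∧ f k ≠ b) ∧
      ∀ k < n, f k ≠ f (k + 1) := by
  obtain ⟨d, hd1, hd2⟩ := not_subset.mp hx
  rw [mem_sdiff, mem_singleton] at hd1
  obtain ⟨e, he, hd⟩ :=
    exists_mem_sdiff_pair_and_mem_pair (b := b) (hℓ 1 le_rfl (by omega)) hd1.1 hd1.2
  rw [mem_sdiff, mem_insert, mem_singleton, not_or] at he
  obtain ⟨he1, hea, heb⟩ := he
  obtain ⟨f, hfg, hmid, hf2⟩ := exists_path_coloring_avoiding ℓ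
    (fun k => if k = 0 then a else if k = 1 then e else c) (by omega)
    (fun k hk hkn => hℓ k (by omega) hkn.le) hd hd2
  have hf0 : f 0 = a := by simpa using hfg 0 (by omega)
  have hf1 : f 1 = e := by simpa using hfg 1 (by omega)
  have hfn : f n = c := by
    simpa [show n ≠ 0 by omega, show n ≠ 1 by omega] using hfg n (by omega)
  refine ⟨f, hf0, hfn, fun k hk => ?_, fun k hk => ?_⟩
  · rcases (by omega : k = 0 ∨ k = 1 ∨ k = n ∨ (2 ≤ k ∧ k < n)) with
      rfl | rfl | rfl | ⟨hk2, hkn⟩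
    · exact hf0 ▸ ⟨ha, hba.symm⟩
    · exact hf1 ▸ ⟨he1, heb⟩
    · exact hfn ▸ ⟨hc, hcb⟩
    · simpa using (hmid k hk2 hkn).1
  · rcases (by omega : k = 0 ∨ k = 1 ∨ 2 ≤ k) with rfl | rfl | hk2
    · rw [hf0, hf1]
      exact Ne.symm hea
    · rw [hf1]
      exact Ne.symm (hf2 (by omega))
    · exact (hmid k hk2 hk).2

theorem mem_Lambda_of_path_coloring (t : ℕ) (L : BWVert t → Finset ℕ) {b : ℕ}
    (hb : b ∈ L none) (g : ℕ → ℕ) (hg : ∀ k ≤ t + 1, g k ∈ L (some k) ∧ g k ≠ b)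
    (hadj : ∀ k < t + 1, g k ≠ g (k + 1)) : g (t + 1) ∈ Lambda t L (g 0) b := by
  have hg' (i : Fin (t + 2)) : g i ∈ L (some i) ∧ g i ≠ b := by
    simpa using hg i (by omega)
  refine ⟨fun v => v.elim b fun i => g i, ⟨fun v => ?_, fun v w hvw => ?_⟩, rfl, rfl, rfl⟩
  · cases v with
    | none => exact hb
    | some i => exact (hg' i).1
  · match v, w, hvw with
    | none, some j, _ => exact (hg' j).2.symm
    | some i, none, _ => exact (hg' i).2
    | some i, some j, Or.inl h =>
      show g i ≠ g j
      exact h ▸ hadj i (by omega)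
    | some i, some j, Or.inr h =>
      show g i ≠ g j
      exact h ▸ (hadj j (by omega)).symm

/-- Theorem 2.4(3), second part: if `|V(G)| ≥ 5` (i.e. `t ≥ 2`), `x = u₂` is the vertex
at distance two from `p` on the path `G - p'`, and `a ∈ L(p)` satisfies
`L(u₁) \ {a} ⊄ L(x)`, then `a` is `(P, G)`-universal: for every `b ∈ L(p') \ {a}` and
every `c ∈ L(p'') \ {b}`, there is an `L`-coloring of `G` using `a, b, c` on
`p, p', p''` respectively. -/
theorem bwheel_universal (t : ℕ) (ht : 2 ≤ t) (L : BWVert t → Finset ℕ)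
    (hL : ∀ v : BWVert t, v ≠ some 0 → v ≠ none → 3 ≤ (L v).card)
    (a : ℕ) (ha : a ∈ L (some 0))
    (hx : ¬ (L (some (1 : Fin (t + 2))) \ {a} ⊆ L (some (⟨2, by omega⟩ : Fin (t + 2))))) :
    ∀ b ∈ L (none : BWVert t), b ≠ a →
      ∀ cc ∈ L (some (Fin.last (t + 1))), cc ≠ b → cc ∈ Lambda t L a b := by
  intro b hb hba cc hcc hccb
  have hcast {k : ℕ} (hk : k < t + 2) : ((k : ℕ) : Fin (t + 2)) = ⟨k, hk⟩ :=
    Fin.ext (Fin.val_cast_of_lt hk)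
  obtain ⟨f, hf0, hfn, hf, hadj⟩ := exists_path_coloring_of_not_subset
    (fun k => L (some (k : Fin (t + 2)))) (n := t + 1) (by omega)
    (fun k hk hkn => hL _ (by simp [hcast (by omega : k < t + 2), Fin.ext_iff]; omega) (by simp))
    (by simpa using ha) hba (by rwa [hcast (by omega)]) hccb
    (by simp only [Nat.cast_one, hcast (by omega : 2 < t + 2)]; exact hx)
  rw [← hf0, ← hfn]
  exact mem_Lambda_of_path_coloring t L hb f hf hadj
end

section
/- Let a, b, c, d, f, r, s be seven pairwise distinct colors. Let G be the simple graph with vertex set {p₀, q₀, z, q₁, p₁, u₁} and edge set {p₀q₀, q₀z, zq₁, q₁p₁, p₁u₁, u₁p₀, q₀u₁, zu₁, q₁u₁}, and let L be the list-assignment L(p₀) = {a}, L(q₀) = {a, b, c, r, s}, L(z) = {b, c, d, r, s}, L(q₁) = {b, c, d, f, s}, L(p₁) = {b, c, f}, L(u₁) = {a, b, c}. Then there is no partial L-coloring φ of {p₀, u₁, z, p₁} with p₀, z, p₁ ∈ dom(φ) such that both |L(q₀) \ {φ(w) : w ∈ N(q₀) ∩ dom(φ)}| ≥ 3 and |L(q₁)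 \ {φ(w) : w ∈ N(q₁) ∩ dom(φ)}| ≥ 3, and such that every extension of φ to an L-coloring of dom(φ) ∪ {q₀, q₁} extends to an L-coloring of all of G. (That is, Crown_L(P, G) = ∅ for the 4-edge path P = p₀q₀zq₁p₁, showing that the hypothesis of Theorem 1.2 that q₀ and q₁ have no common neighbor outside P cannot be dropped.) -/
/-!
If `φ` colors `u₁`, then `φ(u₁) ∈ {b, c}` since `u₁ ∼ p₀`. When `φ(z) = d`, the neighbors
`z, p₁, u₁` of `q₁` carry three distinct colors of `L(q₁)`; otherwise the neighbors
`p₀, z, u₁` of `q₀` carry three distinct colors of `L(q₀)`. Either way a list of five colors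
keeps only two.

If `φ` leaves `u₁` uncolored, color `q₀` and `q₁` so that `p₀, q₀, z, q₁, p₁` together use
all of `L(u₁) = {a, b, c}`; then `u₁` cannot be colored. Such a choice always exists: a
color among `b, c` that `z` and `p₁` leave unused can be put on `q₀` or `q₁`, and if both
are used, then `{φ(z), φ(p₁)} = {b, c}` and `q₀ ↦ r`, `q₁ ↦ d` is proper.
-/

/-- The edge list of the counterexample graph of Figure 6: vertices `0 = p₀`, `1 = q₀`,
`2 = z`, `3 = q₁`, `4 = p₁`, `5 = u₁`; edges `p₀q₀, q₀z, zq₁, q₁p₁, p₁u₁, u₁p₀, q₀u₁,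
zu₁, q₁u₁`. -/
def figEdges : List (Fin 6 × Fin 6) :=
  [(0, 1), (1, 2), (2, 3), (3, 4), (4, 5), (5, 0), (1, 5), (2, 5), (3, 5)]

def figAdj (v w : Fin 6) : Prop := (v, w) ∈ figEdges ∨ (w, v) ∈ figEdges

section ListColoring

variable {V α : Type*} {Adj : V → V → Prop} {L : V → Finset α} {φ : V → Option α}

/-- The list `L_φ(v)` of colors of `L(v)` not used by `φ` on a neighbor of `v`. -/
def availableColors (Adj : V → V → Prop) (L : V → Finset α) (φ : V → Option α) (v : V) :
    Set α :=
  {x | x ∈ L v ∧ ∀ w, Adj v w → φ w ≠ some x}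

theorem ncard_availableColors_le [DecidableEq α] {v : V} {T : Finset α} (hT : T ⊆ L v)
    (hused : ∀ x ∈ T, ∃ w, Adj v w ∧ φ w = some x) :
    (availableColors Adj L φ v).ncard ≤ (L v).card - T.card := by
  have hsub : availableColors Adj L φ v ⊆ ↑(L v \ T) := by
    rintro x ⟨hxL, hfree⟩
    refine Finset.mem_sdiff.mpr ⟨hxL, fun hxT => ?_⟩
    obtain ⟨w, hadj, hw⟩ := hused x hxT
    exact hfree w hadj hw
  calc (availableColors Adj L φ v).ncard ≤ (L v \ T).card :=
        (Set.ncard_le_ncard hsub (Finset.finite_toSet _)).trans_eq (Set.ncard_coe_finset _)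
    _ = (L v).card - T.card := Finset.card_sdiff_of_subset hT

theorem ncard_availableColors_le_card_sub_three [DecidableEq α] {v w₁ w₂ w₃ : V}
    {x₁ x₂ x₃ : α} (hx : {x₁, x₂, x₃} ⊆ L v) (h₁₂ : x₁ ≠ x₂) (h₁₃ : x₁ ≠ x₃) (h₂₃ : x₂ ≠ x₃)
    (hw₁ : Adj v w₁) (hw₂ : Adj v w₂) (hw₃ : Adj v w₃)
    (hφ₁ : φ w₁ = some x₁) (hφ₂ : φ w₂ = some x₂) (hφ₃ : φ w₃ = some x₃) :
    (availableColors Adj L φ v).ncard ≤ (L v).card - 3 := by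
  have hT : ({x₁, x₂, x₃} : Finset α).card = 3 :=
    Finset.card_eq_three.mpr ⟨_, _, _, h₁₂, h₁₃, h₂₃, rfl⟩
  refine hT ▸ ncard_availableColors_le hx ?_
  simp only [Finset.mem_insert, Finset.mem_singleton]
  rintro x (rfl | rfl | rfl)
  exacts [⟨w₁, hw₁, hφ₁⟩, ⟨w₂, hw₂, hφ₂⟩, ⟨w₃, hw₃, hφ₃⟩]

theorem not_exists_extension_of_forall_mem_exists {S : V → Prop} {ψ : V → α} {u : V}
    (hcover : ∀ x ∈ L u, ∃ w, Adj u w ∧ S w ∧ ψ w = x) :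
    ¬ ∃ χ : V → α, (∀ v, χ v ∈ L v) ∧ (∀ v w, Adj v w → χ v ≠ χ w) ∧
      ∀ v, S v → χ v = ψ v := by
  rintro ⟨χ, hχL, hχ, hχψ⟩
  obtain ⟨w, hadj, hw, hψw⟩ := hcover _ (hχL u)
  exact hχ u w hadj (by rw [hχψ w hw, hψw])

end ListColoring

instance : DecidableRel figAdj := fun v w => by unfold figAdj; infer_instance

theorem figAdj_path_of_ne_five {v w : Fin 6} (hvw : figAdj v w) (hv : v ≠ 5) (hw : w ≠ 5) :
    (v, w) ∈ [(0, 1), (1, 0), (1, 2), (2, 1), (2, 3), (3, 2), (3, 4), (4, 3)] := by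
  revert v w; decide

section FigureSix

variable {a b c d f r s : ℕ} {L : Fin 6 → Finset ℕ} {φ : Fin 6 → Option ℕ}

theorem figSix_lacks_colors_of_colored_u (hdist : [a, b, c, d, f, r, s].Pairwise (· ≠ ·))
    (hL1 : L 1 = {a, b, c, r, s}) (hL2 : L 2 = {b, c, d, r, s}) (hL3 : L 3 = {b, c, d, f, s})
    (hL4 : L 4 = {b, c, f}) (hL5 : L 5 = {a, b, c})
    (hφL : ∀ v x, φ v = some x → x ∈ L v)
    (hφ : ∀ v w x y, figAdj v w → φ v = some x → φ w = some y → x ≠ y)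
    {x₂ x₄ x₅ : ℕ} (h₀ : φ 0 = some a) (h₂ : φ 2 = some x₂) (h₄ : φ 4 = some x₄)
    (h₅ : φ 5 = some x₅) :
    (availableColors figAdj L φ 1).ncard < 3 ∨ (availableColors figAdj L φ 3).ncard < 3 := by
  simp only [List.pairwise_cons, List.mem_cons, List.not_mem_nil, or_false, forall_eq_or_imp,
    forall_eq, IsEmpty.forall_iff, implies_true, List.Pairwise.nil, and_true] at hdist
  have hx₂ := hφL 2 x₂ h₂
  have hx₄ := hφL 4 x₄ h₄
  have hx₅ := hφL 5 x₅ h₅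
  have h₀₅ := hφ 0 5 a x₅ (by decide) h₀ h₅
  have h₂₅ := hφ 2 5 x₂ x₅ (by decide) h₂ h₅
  have h₄₅ := hφ 4 5 x₄ x₅ (by decide) h₄ h₅
  simp only [hL2, hL4, hL5, Finset.mem_insert, Finset.mem_singleton] at hx₂ hx₄ hx₅
  by_cases hd : x₂ = d
  · have hsub : {x₂, x₄, x₅} ⊆ L 3 := by
      simp only [hL3, Finset.insert_subset_iff, Finset.singleton_subset_iff, Finset.mem_insert,
        Finset.mem_singleton]
      grind
    have hq₁ := ncard_availableColors_le_card_sub_three (φ := φ) hsub (by grind) (by grind) h₄₅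
      (by decide : figAdj 3 2) (by decide : figAdj 3 4) (by decide : figAdj 3 5) h₂ h₄ h₅
    have : (L 3).card ≤ 5 := hL3 ▸ Finset.card_le_five
    omega
  · have hsub : {a, x₂, x₅} ⊆ L 1 := by
      simp only [hL1, Finset.insert_subset_iff, Finset.singleton_subset_iff, Finset.mem_insert,
        Finset.mem_singleton]
      grind
    have hq₀ := ncard_availableColors_le_card_sub_three (φ := φ) hsub (by grind) h₀₅ h₂₅
      (by decide : figAdj 1 0) (by decide : figAdj 1 2) (by decide : figAdj 1 5) h₀ h₂ h₅
    have : (L 1).card ≤ 5 := hL1 ▸ Finset.card_le_five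
    omega

theorem figSix_exists_blocking_colors (hdist : [a, b, c, d, f, r, s].Pairwise (· ≠ ·))
    (x₂ x₄ : ℕ) :
    ∃ y₁ ∈ ({a, b, c, r, s} : Finset ℕ), ∃ y₃ ∈ ({b, c, d, f, s} : Finset ℕ),
      a ≠ y₁ ∧ y₁ ≠ x₂ ∧ x₂ ≠ y₃ ∧ y₃ ≠ x₄ ∧ ({a, b, c} : Finset ℕ) ⊆ {a, y₁, x₂, y₃, x₄} := by
  simp only [List.pairwise_cons, List.mem_cons, List.not_mem_nil, or_false, forall_eq_or_imp,
    forall_eq, IsEmpty.forall_iff, implies_true, List.Pairwise.nil, and_true] at hdist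
  by_cases hb : b = x₂ ∨ b = x₄ <;> by_cases hc : c = x₂ ∨ c = x₄
  · exact ⟨r, by simp, d, by simp, by simp [Finset.insert_subset_iff]; grind⟩
  · exact ⟨c, by simp, c, by simp, by simp [Finset.insert_subset_iff]; grind⟩
  · exact ⟨b, by simp, b, by simp, by simp [Finset.insert_subset_iff]; grind⟩
  · exact ⟨b, by simp, c, by simp, by simp [Finset.insert_subset_iff]; grind⟩

theorem figSix_not_extendable_of_uncolored_u (hdist : [a, b, c, d, f, r, s].Pairwise (· ≠ ·))
    (hL1 : L 1 = {a, b, c, r, s}) (hL3 : L 3 = {b, c, d, f, s}) (hL5 : L 5 = {a, b, c})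
    {x₂ x₄ : ℕ} (h₀ : φ 0 = some a) (h₁ : φ 1 = none) (h₂ : φ 2 = some x₂) (h₃ : φ 3 = none)
    (h₄ : φ 4 = some x₄) (h₅ : φ 5 = none) :
    ¬ ∀ ψ : Fin 6 → ℕ,
        (∀ v x, φ v = some x → ψ v = x) →
        ψ 1 ∈ L 1 → ψ 3 ∈ L 3 →
        (∀ v w, figAdj v w → ((φ v).isSome ∨ v = 1 ∨ v = 3) →
          ((φ w).isSome ∨ w = 1 ∨ w = 3) → ψ v ≠ ψ w) →
        ∃ χ : Fin 6 → ℕ, (∀ v, χ v ∈ L v) ∧ (∀ v w, figAdj v w → χ v ≠ χ w) ∧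
          ∀ v, ((φ v).isSome ∨ v = 1 ∨ v = 3) → χ v = ψ v := by
  obtain ⟨y₁, hy₁, y₃, hy₃, h₀₁, h₁₂, h₂₃, h₃₄, hcover⟩ :=
    figSix_exists_blocking_colors hdist x₂ x₄
  have hS (v : Fin 6) : ((φ v).isSome ∨ v = 1 ∨ v = 3) ↔ v ≠ 5 := by
    fin_cases v <;> simp [h₀, h₁, h₂, h₃, h₄, h₅]
  intro hext
  refine not_exists_extension_of_forall_mem_exists (u := 5) ?_
    (hext ![a, y₁, x₂, y₃, x₄, a] ?_ (hL1 ▸ hy₁) (hL3 ▸ hy₃) ?_)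
  · intro x hx
    rw [hL5] at hx
    have := hcover hx
    simp only [Finset.mem_insert, Finset.mem_singleton] at this
    rcases this with rfl | rfl | rfl | rfl | rfl
    exacts [⟨0, by decide, by simp [h₀], rfl⟩, ⟨1, by decide, by simp, rfl⟩,
      ⟨2, by decide, by simp [h₂], rfl⟩, ⟨3, by decide, by simp, rfl⟩,
      ⟨4, by decide, by simp [h₄], rfl⟩]
  · intro v x hv
    fin_cases v <;> simp [h₀, h₁, h₂, h₃, h₄, h₅] at hv ⊢ <;> exact hv
  · intro v w hvw hv hw
    have hpath := figAdj_path_of_ne_five hvw ((hS v).1 hv) ((hS w).1 hw)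
    simp only [List.mem_cons, List.not_mem_nil, Prod.mk.injEq, or_false] at hpath
    rcases hpath with ⟨rfl, rfl⟩ | ⟨rfl, rfl⟩ | ⟨rfl, rfl⟩ | ⟨rfl, rfl⟩ | ⟨rfl, rfl⟩ |
      ⟨rfl, rfl⟩ | ⟨rfl, rfl⟩ | ⟨rfl, rfl⟩
    exacts [h₀₁, h₀₁.symm, h₁₂, h₁₂.symm, h₂₃, h₂₃.symm, h₃₄, h₃₄.symm]

end FigureSix

/-- Partial colorings are encoded as `φ : Fin 6 → Option ℕ`, with `φ v = some x` meaning that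
`v ∈ dom(φ)` is colored `x`. -/
theorem no_crown_for_figure_six (a b c d f r s : ℕ)
    (hdist : [a, b, c, d, f, r, s].Pairwise (· ≠ ·))
    (L : Fin 6 → Finset ℕ)
    (hL0 : L 0 = {a}) (hL1 : L 1 = {a, b, c, r, s}) (hL2 : L 2 = {b, c, d, r, s})
    (hL3 : L 3 = {b, c, d, f, s}) (hL4 : L 4 = {b, c, f}) (hL5 : L 5 = {a, b, c}) :
    ¬ ∃ φ : Fin 6 → Option ℕ,
      (∀ v : Fin 6, (φ v).isSome → v ∈ ({0, 5, 2, 4} : Set (Fin 6))) ∧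
      (φ 0).isSome ∧ (φ 2).isSome ∧ (φ 4).isSome ∧
      (∀ v x, φ v = some x → x ∈ L v) ∧
      (∀ v w x y, figAdj v w → φ v = some x → φ w = some y → x ≠ y) ∧
      3 ≤ {x | x ∈ L 1 ∧ ∀ w, figAdj 1 w → φ w ≠ some x}.ncard ∧
      3 ≤ {x | x ∈ L 3 ∧ ∀ w, figAdj 3 w → φ w ≠ some x}.ncard ∧
      (∀ ψ : Fin 6 → ℕ,
        (∀ v x, φ v = some x → ψ v = x) →
        ψ 1 ∈ L 1 → ψ 3 ∈ L 3 →
        (∀ v w, figAdj v w → ((φ v).isSome ∨ v = 1 ∨ v = 3) →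
          ((φ w).isSome ∨ w = 1 ∨ w = 3) → ψ v ≠ ψ w) →
        ∃ χ : Fin 6 → ℕ, (∀ v, χ v ∈ L v) ∧ (∀ v w, figAdj v w → χ v ≠ χ w) ∧
          ∀ v, ((φ v).isSome ∨ v = 1 ∨ v = 3) → χ v = ψ v) := by
  rintro ⟨φ, hdom, h₀, h₂, h₄, hφL, hφ, hq₀, hq₁, hext⟩
  have hnone (v : Fin 6) (hv : v ∉ ({0, 5, 2, 4} : Set (Fin 6))) : φ v = none :=
    Option.not_isSome_iff_eq_none.mp (mt (hdom v) hv)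
  obtain ⟨x₀, h₀⟩ := Option.isSome_iff_exists.mp h₀
  obtain rfl : x₀ = a := by simpa [hL0] using hφL 0 x₀ h₀
  obtain ⟨x₂, h₂⟩ := Option.isSome_iff_exists.mp h₂
  obtain ⟨x₄, h₄⟩ := Option.isSome_iff_exists.mp h₄
  cases h₅ : φ 5 with
  | some x₅ =>
    have hlack := figSix_lacks_colors_of_colored_u hdist hL1 hL2 hL3 hL4 hL5 hφL hφ h₀ h₂ h₄ h₅
    exact hlack.elim (absurd hq₀ ·.not_ge) (absurd hq₁ ·.not_ge)
  | none =>
    exact figSix_not_extendable_of_uncolored_u hdist hL1 hL3 hL5 h₀ (hnone 1 (by simp)) h₂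
      (hnone 3 (by simp)) h₄ h₅ hext
end
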